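/- arXiv:2403.15628 — 3 statements merged into one kernel-verified Lean document; each statement's English description precedes it below -/
import Mathlib

section
/- Let (E,T,S,e) be a conditional expectation preserving system with T strictly positive and S surjective, and let p be a component of e. Then for all m, n ∈ ℕ and indices 0 ≤ i ≤ m−1, 0 ≤ j ≤ n−1 with (i,m) ≠ (j,n), one has S^i q(p,m) ⊓ S^j q(p,n) = 0. -/
noncomputable section

open Function Set

variable {E : Type*}

/-- `e` is a weak order unit: `e > 0` and `e ⊓ |x| = 0` implies `x = 0`. -/
def WeakOrderUnit [Lattice E] [AddCommGroup E] (e : E) : Prop :=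
  0 < e ∧ ∀ x : E, e ⊓ (x ⊔ -x) = 0 → x = 0

/-- `p` is a component of `q ∈ E₊`: `0 ≤ p ≤ q` and `(q - p) ⊓ p = 0`. -/
def IsComponent [Lattice E] [AddCommGroup E] (q p : E) : Prop :=
  0 ≤ p ∧ p ≤ q ∧ (q - p) ⊓ p = 0

/-- `partialSup f n = ⋁_{j < n} f j`, with the empty supremum equal to `0`. -/
def partialSup [Lattice E] [Zero E] (f : ℕ → E) : ℕ → E
  | 0 => 0
  | n + 1 => partialSup f n ⊔ f n

/-- The band projection of `e` onto the band generated by `g`: `P_g e = ⨆_{m ∈ ℕ} (e ⊓ m•g)`. -/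
def bandProjApp [ConditionallyCompleteLattice E] [AddCommGroup E] (g e : E) : E :=
  ⨆ m : ℕ, e ⊓ m • g

/-- `qComp Sinv e p k = p ⊓ S⁻ᵏp ⊓ (e - ⋁_{j=1}^{k-1} S⁻ʲp)` (empty supremum is `0`). -/
def qComp [Lattice E] [AddCommGroup E] (Sinv : E → E) (e p : E) (k : ℕ) : E :=
  p ⊓ Sinv^[k] p ⊓ (e - partialSup (fun j => Sinv^[j + 1] p) (k - 1))

/-- `(E,T,S,e)` is a conditional expectation preserving system: `E` is a Dedekind complete
Riesz space (typeclass assumptions), `e` is a weak order unit, `T` is a strictly positive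
conditional expectation operator with `Te = e`, and `S` is an order-continuous Riesz
homomorphism with `Se = e` and `TS = T`. -/
structure IsCEPS [ConditionallyCompleteLattice E] [AddCommGroup E] [Module ℝ E]
    (T S : E →ₗ[ℝ] E) (e : E) : Prop where
  unit : WeakOrderUnit e
  T_pos : ∀ f : E, 0 ≤ f → 0 ≤ T f
  T_strictPos : ∀ f : E, 0 ≤ f → T f = 0 → f = 0
  T_proj : ∀ f : E, T (T f) = T f
  T_ordCont : ∀ D : Set E, D.Nonempty → DirectedOn (· ≥ ·) D → IsGLB D 0 →
    IsGLB ((⇑T) '' D) 0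
  T_range_sublattice : ∀ x ∈ Set.range T, ∀ y ∈ Set.range T, x ⊔ y ∈ Set.range T
  T_range_dedekind : ∀ D : Set E, D ⊆ Set.range T → D.Nonempty →
    (∃ b ∈ Set.range T, ∀ x ∈ D, x ≤ b) →
    ∃ s ∈ Set.range T, (∀ x ∈ D, x ≤ s) ∧ ∀ b ∈ Set.range T, (∀ x ∈ D, x ≤ b) → s ≤ b
  T_weakUnit : ∀ u : E, WeakOrderUnit u → WeakOrderUnit (T u)
  Te : T e = e
  S_hom : ∀ x y : E, S (x ⊔ y) = S x ⊔ S y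
  S_ordCont : ∀ D : Set E, D.Nonempty → DirectedOn (· ≥ ·) D → IsGLB D 0 →
    IsGLB ((⇑S) '' D) 0
  Se : S e = e
  TS : ∀ f : E, T (S f) = T f

/-- `E` is `T`-universally complete: every upward directed subset `D` of `E₊` for which
`T '' D` is order bounded in `E` has a supremum in `E`. -/
def TUnivComplete [ConditionallyCompleteLattice E] [AddCommGroup E] [Module ℝ E]
    (T : E →ₗ[ℝ] E) : Prop :=
  ∀ D : Set E, D.Nonempty → D ⊆ {x : E | 0 ≤ x} → DirectedOn (· ≤ ·) D →
    BddAbove ((⇑T) '' D) → BddBelow ((⇑T) '' D) → ∃ s : E, IsLUB D s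

/-- `(S, v)` is aperiodic (with `Sinv` the inverse of `S`): for every `N ∈ ℕ` and every
nonzero component `c` of `v` there exist `k ≥ N` and a component `u` of `c` with
`q(u,k) ≠ 0`. -/
def IsAperiodic [Lattice E] [AddCommGroup E] (Sinv : E → E) (e v : E) : Prop :=
  ∀ N : ℕ, ∀ c : E, IsComponent v c → c ≠ 0 →
    ∃ k : ℕ, N ≤ k ∧ ∃ u : E, IsComponent c u ∧ qComp Sinv e u k ≠ 0

/-- `(S, e)` is periodic (with `Sinv` the inverse of `S`): there is `N ∈ ℕ` such that
`q(c,k) = 0` for all `k ≥ N` and all components `c` of `e` with `0 ≠ c ≠ e`. -/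
def IsPeriodic [Lattice E] [AddCommGroup E] (Sinv : E → E) (e : E) : Prop :=
  ∃ N : ℕ, ∀ c : E, IsComponent e c → c ≠ 0 → c ≠ e → ∀ k : ℕ, N ≤ k → qComp Sinv e c k = 0

/-!
Since `TS = T` and `T` is strictly positive, `S` is injective; being also surjective, its inverse
`S⁻¹` is a Riesz homomorphism fixing `e`, so every `S⁻ᵏp` is a component of `e`. By construction
`q(p,m) ≤ S⁻ᵐp` and `q(p,m) ≤ e - S⁻ˡp` for `0 < l < m`, so `q(p,m)` is disjoint from `S⁻ˡp`.
For `j = i + d`, pulling back along the lattice isomorphism `Sⁱ⁺ᵈ` turns the claim into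
`S⁻ᵈq(p,m) ⊓ q(p,n) = 0`: for `d > 0` this holds as `S⁻ᵈq(p,m) ≤ S⁻ᵈp` with `d < n`, and for
`d = 0` because `m ≠ n` and the one of `q(p,m)`, `q(p,n)` with the smaller index `k` lies below
`S⁻ᵏp`.
-/

section Lattice

variable [Lattice E] [Zero E]

theorem inf_eq_zero_of_le_of_le {a b x y : E} (ha : 0 ≤ a) (hb : 0 ≤ b) (hax : a ≤ x)
    (hby : b ≤ y) (hxy : x ⊓ y = 0) : a ⊓ b = 0 :=
  le_antisymm (hxy ▸ inf_le_inf hax hby) (le_inf ha hb)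

theorem partialSup_le {f : ℕ → E} {b : E} (hb : 0 ≤ b) (hf : ∀ j, f j ≤ b) :
    ∀ n, partialSup f n ≤ b
  | 0 => hb
  | n + 1 => sup_le (partialSup_le hb hf n) (hf n)

theorem le_partialSup {f : ℕ → E} {j : ℕ} : ∀ {n : ℕ}, j < n → f j ≤ partialSup f n
  | n + 1, h => by
    rcases Nat.lt_succ_iff_lt_or_eq.mp h with h | rfl
    · exact (le_partialSup h).trans le_sup_left
    · exact le_sup_right

end Lattice

section LatticeOrderedGroup

variable [Lattice E] [AddCommGroup E] {e : E}

theorem IsComponent.map {f : E → E} (hsub : ∀ a b, f (a - b) = f a - f b)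
    (hinf : ∀ a b, f (a ⊓ b) = f a ⊓ f b) (he : f e = e) {c : E} (hc : IsComponent e c) :
    IsComponent e (f c) := by
  have hmono : Monotone f := Monotone.of_map_inf hinf
  have hzero : f 0 = 0 := by simpa using hsub 0 0
  refine ⟨hzero ▸ hmono hc.1, he ▸ hmono hc.2.1, ?_⟩
  rw [← he, ← hsub, ← hinf, hc.2.2, hzero]

theorem IsComponent.iterate_map {f : E → E} (hsub : ∀ a b, f (a - b) = f a - f b)
    (hinf : ∀ a b, f (a ⊓ b) = f a ⊓ f b) (he : f e = e) {c : E} (hc : IsComponent e c)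
    (k : ℕ) : IsComponent e (f^[k] c) := by
  induction k with
  | zero => exact hc
  | succ k ih =>
    rw [Function.iterate_succ_apply']
    exact ih.map hsub hinf he

variable {g : E → E} {p : E}

theorem qComp_le_self (m : ℕ) : qComp g e p m ≤ p :=
  inf_le_left.trans inf_le_left

theorem qComp_le_iterate (m : ℕ) : qComp g e p m ≤ g^[m] p :=
  inf_le_left.trans inf_le_right

variable [CovariantClass E E (· + ·) (· ≤ ·)] (hg : ∀ k, IsComponent e (g^[k] p))
include hg

theorem qComp_nonneg (m : ℕ) : 0 ≤ qComp g e p m := by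
  have he : 0 ≤ e := (hg 0).1.trans (hg 0).2.1
  exact le_inf (le_inf (hg 0).1 (hg m).1)
    (sub_nonneg.2 (partialSup_le he (fun j => (hg (j + 1)).2.1) _))

theorem qComp_inf_iterate_eq_zero {m l : ℕ} (hl : 1 ≤ l) (hlm : l < m) :
    qComp g e p m ⊓ g^[l] p = 0 := by
  have hle : g^[l] p ≤ partialSup (fun j => g^[j + 1] p) (m - 1) := by
    obtain ⟨j, rfl⟩ := Nat.exists_eq_add_of_le' hl
    exact le_partialSup (f := fun j => g^[j + 1] p) (by omega)
  exact inf_eq_zero_of_le_of_le (qComp_nonneg hg m) (hg l).1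
    (inf_le_right.trans (sub_le_sub_left hle e)) le_rfl (hg l).2.2

theorem qComp_inf_qComp_eq_zero {m n : ℕ} (hm : 1 ≤ m) (hmn : m < n) :
    qComp g e p m ⊓ qComp g e p n = 0 :=
  inf_eq_zero_of_le_of_le (qComp_nonneg hg m) (qComp_nonneg hg n) (qComp_le_iterate m) le_rfl
    (inf_comm (g^[m] p) _ ▸ qComp_inf_iterate_eq_zero hg hm hmn)

end LatticeOrderedGroup

namespace IsCEPS

variable [ConditionallyCompleteLattice E] [AddCommGroup E] [Module ℝ E]
  [CovariantClass E E (· + ·) (· ≤ ·)] {T S : E →ₗ[ℝ] E} {e : E}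

theorem map_inf (hC : IsCEPS T S e) (a b : E) : S (a ⊓ b) = S a ⊓ S b := by
  rw [← neg_neg (a ⊓ b), neg_inf, map_neg, hC.S_hom, map_neg, map_neg, neg_sup, neg_neg,
    neg_neg]

theorem injective (hC : IsCEPS T S e) : Function.Injective S := by
  refine (injective_iff_map_eq_zero S).2 fun f hf => ?_
  have habs : |f| = 0 := by
    refine hC.T_strictPos _ (abs_nonneg f) ?_
    rw [← hC.TS, abs, hC.S_hom, map_neg, hf, neg_zero, sup_idem, map_zero]
  exact le_antisymm (habs ▸ le_abs_self f) (neg_nonpos.1 (habs ▸ neg_le_abs f))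

variable (hC : IsCEPS T S e) (hS : Function.Surjective S)
include hC

theorem surjInv_map_sub (a b : E) :
    Function.surjInv hS (a - b) = Function.surjInv hS a - Function.surjInv hS b :=
  hC.injective <| by simp only [map_sub, Function.surjInv_eq]

theorem surjInv_map_inf (a b : E) :
    Function.surjInv hS (a ⊓ b) = Function.surjInv hS a ⊓ Function.surjInv hS b :=
  hC.injective <| by simp only [hC.map_inf, Function.surjInv_eq]

theorem surjInv_unit : Function.surjInv hS e = e :=
  hC.injective <| by rw [Function.surjInv_eq hS, hC.Se]

theorem isComponent_iterate_surjInv {p : E} (hp : IsComponent e p) (k : ℕ) :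
    IsComponent e ((Function.surjInv hS)^[k] p) :=
  hp.iterate_map (hC.surjInv_map_sub hS) (hC.surjInv_map_inf hS) (hC.surjInv_unit hS) k

theorem qComp_inf_iterate_qComp_eq_zero {p : E} (hp : IsComponent e p) {m n d : ℕ}
    (hm : 1 ≤ m) (hdn : d < n) (hne : (0, m) ≠ (d, n)) :
    qComp (Function.surjInv hS) e p m ⊓ (⇑S)^[d] (qComp (Function.surjInv hS) e p n) = 0 := by
  set σ := Function.surjInv hS
  have hσ := hC.isComponent_iterate_surjInv hS hp
  rcases Nat.eq_zero_or_pos d with rfl | hd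
  · rcases lt_or_gt_of_ne fun h : m = n => hne (h ▸ rfl) with hmn | hnm
    · exact qComp_inf_qComp_eq_zero hσ hm hmn
    · rw [inf_comm]
      exact qComp_inf_qComp_eq_zero hσ (by omega) hnm
  have hσd_mono : Monotone σ^[d] := (Monotone.of_map_inf (hC.surjInv_map_inf hS)).iterate d
  have hσd_zero : σ^[d] 0 = 0 :=
    Function.iterate_fixed (by simpa using hC.surjInv_map_sub hS 0 0) d
  have hpulled : σ^[d] (qComp σ e p m) ⊓ qComp σ e p n = 0 :=
    inf_eq_zero_of_le_of_le (hσd_zero ▸ hσd_mono (qComp_nonneg hσ m)) (qComp_nonneg hσ n)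
      (hσd_mono (qComp_le_self m)) le_rfl
      (inf_comm (σ^[d] p) _ ▸ qComp_inf_iterate_eq_zero hσ hd hdn)
  calc qComp σ e p m ⊓ (⇑S)^[d] (qComp σ e p n)
      = (⇑S)^[d] (σ^[d] (qComp σ e p m)) ⊓ (⇑S)^[d] (qComp σ e p n) := by
        rw [(Function.rightInverse_surjInv hS).iterate d]
    _ = (⇑S)^[d] (σ^[d] (qComp σ e p m) ⊓ qComp σ e p n) :=
        ((Function.Semiconj₂.iterate hC.map_inf d) _ _).symm
    _ = 0 := by rw [hpulled, iterate_map_zero]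

end IsCEPS

theorem tower_disjointness_general {E : Type*} [ConditionallyCompleteLattice E] [AddCommGroup E]
    [Module ℝ E] [CovariantClass E E (· + ·) (· ≤ ·)]
    (T S : E →ₗ[ℝ] E) (e : E) (hCEPS : IsCEPS T S e)
    (hS : Function.Surjective ⇑S)
    (p : E) (hp : IsComponent e p) :
    ∀ m n i j : ℕ, 1 ≤ m → 1 ≤ n → i ≤ m - 1 → j ≤ n - 1 → (i, m) ≠ (j, n) →
      (⇑S)^[i] (qComp (Function.surjInv hS) e p m) ⊓
        (⇑S)^[j] (qComp (Function.surjInv hS) e p n) = 0 := by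
  intro m n i j hm hn hi hj hne
  wlog hij : i ≤ j generalizing m n i j
  · rw [inf_comm]
    exact this n m j i hn hm hj hi hne.symm (by omega)
  obtain ⟨d, rfl⟩ := Nat.exists_eq_add_of_le hij
  have hdisj := hCEPS.qComp_inf_iterate_qComp_eq_zero hS hp hm (d := d) (n := n) (by omega)
    fun h => hne (by simp_all)
  rw [Function.iterate_add_apply, ← Function.Semiconj₂.iterate hCEPS.map_inf i, hdisj,
    iterate_map_zero]

/-- Disjointness of the tower pieces: `Sⁱq(p,m) ⊓ Sʲq(p,n) = 0` whenever
`0 ≤ i ≤ m-1`, `0 ≤ j ≤ n-1` and `(i,m) ≠ (j,n)`. -/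
theorem tower_disjointness {E : Type*} [ConditionallyCompleteLattice E] [AddCommGroup E]
    [Module ℝ E] [CovariantClass E E (· + ·) (· ≤ ·)] [PosSMulMono ℝ E]
    (T S : E →ₗ[ℝ] E) (e : E) (hCEPS : IsCEPS T S e)
    (hS : Function.Surjective ⇑S)
    (p : E) (hp : IsComponent e p) :
    ∀ m n i j : ℕ, 1 ≤ m → 1 ≤ n → i ≤ m - 1 → j ≤ n - 1 → (i, m) ≠ (j, n) →
      (⇑S)^[i] (qComp (Function.surjInv hS) e p m) ⊓
        (⇑S)^[j] (qComp (Function.surjInv hS) e p n) = 0 :=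
  tower_disjointness_general T S e hCEPS hS p hp
end
end

section
/- Let (E,T,S,e) be a conditionally ergodic conditional expectation preserving system with T strictly positive and S surjective, and assume every upward directed subset D of E₊ for which {Tf : f ∈ D} is order bounded in E has a supremum in E. Then for each component p of e, the increasing sequence of partial sums ∑_{k=1}^{N} k·T(q(p,k)) has supremum P_{Tp}e in E; that is, ⨆_{N≥1} ∑_{k=1}^{N} k·T(q(p,k)) = P_{Tp}e (Kac's formula: the conditional expectation of the first recurrence time n(p) = ∑_{k≥1} k·q(p,k) equals P_{Tp}e). -/
noncomputable section

open Function Set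

variable {E : Type*}

/-!
Write `R = S⁻¹` and let `fₙ = (e - ⋁_{i<n} Rⁱp) ⊓ Rⁿp` be the part of `e` entering `p` for the
first time at time `n`. Splitting `R fₙ` along the component `p` gives `R fₙ = q(p,n+1) + fₙ₊₁`;
as `TR = T`, summation by parts turns the partial sums into
`∑_{k ≤ N} k • T q(p,k) = T (⋁_{i<N} Rⁱp) - N • T f_N`.
With `a = ⨆ᵢ Rⁱp`, the first term increases to `Ta` by order continuity of `T`, and
`N • T f_N → 0` because `∑ₙ T fₙ` converges and `T fₙ` decreases. Since `a ≤ S a`, strict positivity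
and `TS = T` make `a` invariant, so `Ta = a` by ergodicity; `a` is a component of `e` dominating
`Tp`, which squeezes `P_{Tp}e` between the partial sums and their least upper bound `a`.
-/

section LatticeGroup

variable [Lattice E] [AddCommGroup E] [IsOrderedAddMonoid E]

theorem isLUB_range_iff_isGLB_range_sub {ι : Type*} {f : ι → E} {a : E} :
    IsLUB (range f) a ↔ IsGLB (range fun i => a - f i) 0 := by
  simp only [IsLUB, IsGLB, IsLeast, IsGreatest, mem_upperBounds, mem_lowerBounds,
    forall_mem_range, sub_nonneg]
  refine ⟨fun ⟨hub, hleast⟩ => ⟨hub, fun c hc => ?_⟩, fun ⟨hub, hgreatest⟩ => ⟨hub, fun u hu => ?_⟩⟩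
  · simpa using hleast (a - c) fun i => le_sub_comm.1 (hc i)
  · simpa using hgreatest (a - u) fun i => sub_le_sub_left (hu i) a

theorem Antitone.isGLB_range_add {ι : Type*} [SemilatticeSup ι] {g d : ι → E}
    (hg : Antitone g) (hd : Antitone d) (hg0 : IsGLB (range g) 0) (hd0 : IsGLB (range d) 0) :
    IsGLB (range (g + d)) 0 := by
  refine ⟨forall_mem_range.2 fun i => add_nonneg (hg0.1 (mem_range_self i))
    (hd0.1 (mem_range_self i)), fun c hc => hd0.2 (forall_mem_range.2 fun j => ?_)⟩
  have hcj : c - d j ≤ 0 := hg0.2 <| forall_mem_range.2 fun i => sub_le_iff_le_add.2 <|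
    (hc (mem_range_self (i ⊔ j))).trans (add_le_add (hg le_sup_left) (hd le_sup_right))
  exact sub_nonpos.1 hcj

theorem IsComponent.inf_add_inf_sub {e c z : E} (hc : IsComponent e c) (hz0 : 0 ≤ z)
    (hze : z ≤ e) : z ⊓ c + z ⊓ (e - c) = z := by
  obtain ⟨hc0, hce, hdisj⟩ := hc
  let := AddCommGroup.toDistribLattice E
  have hcover : c ⊔ (e - c) = e := by
    have h := inf_add_sup c (e - c)
    rwa [inf_comm, hdisj, zero_add, add_sub_cancel] at h
  have hpieces : z ⊓ c ⊓ (z ⊓ (e - c)) = 0 := by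
    rw [← inf_inf_distrib_left, inf_comm c, hdisj, inf_eq_right.2 hz0]
  rw [← inf_add_sup, hpieces, zero_add, ← inf_sup_left, hcover, inf_eq_left.2 hze]

theorem IsComponent.inf_nsmul_le {e c : E} (hc : IsComponent e c) : ∀ n : ℕ, e ⊓ n • c ≤ c
  | 0 => by simpa using inf_le_right.trans hc.1
  | n + 1 => by
    have hmult : (e - c) ⊓ n • c ≤ (e - c) ⊓ c := le_inf inf_le_left <|
      (le_inf (inf_le_left.trans (sub_le_self e hc.1)) inf_le_right).trans (hc.inf_nsmul_le n)
    rw [succ_nsmul, ← sub_nonpos, inf_sub, add_sub_cancel_right]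
    exact hmult.trans hc.2.2.le

theorem isComponent_of_isLUB {ι : Type*} [Nonempty ι] {e a : E} {f : ι → E}
    (hf : ∀ i, IsComponent e (f i)) (ha : IsLUB (range f) a) : IsComponent e a := by
  obtain ⟨i₀⟩ := ‹Nonempty ι›
  have ha0 : 0 ≤ a := (hf i₀).1.trans (ha.1 (mem_range_self i₀))
  have hae : a ≤ e := ha.2 (forall_mem_range.2 fun i => (hf i).2.1)
  refine ⟨ha0, hae, le_antisymm ?_ (le_inf (sub_nonneg.2 hae) ha0)⟩
  refine (isLUB_range_iff_isGLB_range_sub.1 ha).2 (forall_mem_range.2 fun i => ?_)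
  have hfa : f i ≤ a := ha.1 (mem_range_self i)
  rw [← sub_nonpos, inf_sub, sub_sub_cancel]
  calc (e - a - (a - f i)) ⊓ f i ≤ (e - f i) ⊓ f i :=
        inf_le_inf_right _ ((sub_le_self _ (sub_nonneg.2 hfa)).trans (sub_le_sub_left hfa e))
    _ = 0 := (hf i).2.2

end LatticeGroup

section PartialSup

variable [Lattice E] [Zero E]

theorem partialSup_nonneg (f : ℕ → E) : ∀ n, 0 ≤ partialSup f n
  | 0 => le_rfl
  | n + 1 => (partialSup_nonneg f n).trans le_sup_left

theorem partialSup_mono (f : ℕ → E) : Monotone (partialSup f) :=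
  monotone_nat_of_le_succ fun _ => le_sup_left

theorem upperBounds_range_partialSup {f : ℕ → E} (hf : ∀ n, 0 ≤ f n) :
    upperBounds (range (partialSup f)) = upperBounds (range f) := by
  ext x
  simp only [mem_upperBounds, forall_mem_range]
  refine ⟨fun h n => le_sup_right.trans (h (n + 1)), fun h n => ?_⟩
  induction n with
  | zero => exact (hf 0).trans (h 0)
  | succ n ih => exact sup_le ih (h n)

theorem partialSup_succ' (f : ℕ → E) :
    ∀ n, partialSup f (n + 1) = f 0 ⊔ partialSup (fun i => f (i + 1)) n
  | 0 => sup_comm _ _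
  | n + 1 => by
    simp only [partialSup] at partialSup_succ' ⊢
    rw [partialSup_succ' f n, sup_assoc]

theorem map_partialSup {F : Type*} [FunLike F E E] [SupHomClass F E E] [ZeroHomClass F E E]
    (g : F) (f : ℕ → E) : ∀ n, g (partialSup f n) = partialSup (fun i => g (f i)) n
  | 0 => map_zero g
  | n + 1 => by rw [partialSup, map_sup, map_partialSup g f n]; rfl

end PartialSup

section Components

variable [Lattice E] [AddCommGroup E]

theorem IsComponent.map_s15 {e c : E} (hc : IsComponent e c) (Ψ : E ≃+o E) (he : Ψ e = e) :
    IsComponent e (Ψ c) := by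
  obtain ⟨hc0, hce, hdisj⟩ := hc
  refine ⟨?_, ?_, ?_⟩
  · simpa using OrderHomClass.mono Ψ hc0
  · simpa [he] using OrderHomClass.mono Ψ hce
  · rw [← he, ← map_sub, ← map_inf, hdisj, map_zero]

theorem IsComponent.iterate {e c : E} (hc : IsComponent e c) (Ψ : E ≃+o E) (he : Ψ e = e)
    (n : ℕ) : IsComponent e (Ψ^[n] c) := by
  induction n with
  | zero => exact hc
  | succ n ih => rw [iterate_succ_apply']; exact ih.map_s15 Ψ he

theorem IsComponent.partialSup_iterate_le {e p : E} (hp : IsComponent e p) (Ψ : E ≃+o E)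
    (hΨe : Ψ e = e) (n : ℕ) : partialSup (fun i => Ψ^[i] p) n ≤ e :=
  (upperBounds_range_partialSup fun i => (hp.iterate Ψ hΨe i).1).symm.subset
    (forall_mem_range.2 fun i => (hp.iterate Ψ hΨe i).2.1) (mem_range_self n)

end Components

theorem Finset.sum_Icc_nsmul_eq_sub {G : Type*} [AddCommGroup G] {q h P : ℕ → G}
    (hq : ∀ n, h n = q (n + 1) + h (n + 1)) (hP : ∀ n, h n + P n = P (n + 1)) (N : ℕ) :
    ∑ k ∈ Finset.Icc 1 N, k • q k = P N - P 0 - N • h N := by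
  induction N with
  | zero => simp
  | succ N ih =>
    rw [Finset.sum_Icc_succ_top (Nat.le_add_left 1 N), ih, ← hP N,
      eq_sub_of_add_eq (hq N).symm, nsmul_sub, succ_nsmul, succ_nsmul]
    abel

section Convergence

variable [Lattice E] [AddCommGroup E] [IsOrderedAddMonoid E]

theorem le_zero_of_forall_le_sub_add_nsmul {P x : ℕ → E} {H c : E} (hP : IsLUB (range P) H)
    (hPx : ∀ n, P (n + 1) = P n + x n) (hx0 : ∀ n, 0 ≤ x n) (hx : Antitone x)
    (hc : ∀ n, c ≤ H - P n + n • x n) : c ≤ 0 := by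
  set d : ℕ → E := fun n => H - P n
  have hPmono : Monotone P :=
    monotone_nat_of_le_succ fun n => (hPx n).symm ▸ le_add_of_nonneg_right (hx0 n)
  have hd : Antitone d := fun m n h => sub_le_sub_left (hPmono h) H
  have hd0 : IsGLB (range d) 0 := isLUB_range_iff_isGLB_range_sub.1 hP
  have htail : ∀ n, n • x (2 * n) ≤ d n := fun n =>
    calc n • x (2 * n) = (Finset.Ico n (2 * n)).card • x (2 * n) := by
          rw [Nat.card_Ico, two_mul, Nat.add_sub_cancel]
      _ ≤ ∑ i ∈ Finset.Ico n (2 * n), x i :=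
          Finset.card_nsmul_le_sum _ _ _ fun i hi => hx (Finset.mem_Ico.1 hi).2.le
      _ = P (2 * n) - P n := by
          rw [← Finset.sum_Ico_sub P (by omega)]
          exact Finset.sum_congr rfl fun i _ => by rw [hPx, add_sub_cancel_left]
      _ ≤ d n := sub_le_sub_right (hP.1 (mem_range_self _)) _
  have hbound : ∀ n, c ≤ (d + (d + d)) n := fun n =>
    calc c ≤ d (2 * n) + (2 * n) • x (2 * n) := mod_cast hc (2 * n)
      _ ≤ d n + (d n + d n) := by
          rw [show (2 * n) • x (2 * n) = n • x (2 * n) + n • x (2 * n) by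
            rw [two_mul, add_nsmul]]
          exact add_le_add (hd (by omega)) (add_le_add (htail n) (htail n))
  exact (hd.isGLB_range_add (hd.add hd) hd0 (hd.isGLB_range_add hd hd0 hd0)).2
    (forall_mem_range.2 hbound)

end Convergence

/-- With `R = S⁻¹`, the component `R^[i] p` is the event "the orbit is in `p` at time `i`";
`firstEntry R e p n` is the part of `e` whose first visit to `p` happens at time `n`. -/
def firstEntry [Lattice E] [AddCommGroup E] (R : E → E) (e p : E) (n : ℕ) : E :=
  (e - partialSup (fun i => R^[i] p) n) ⊓ R^[n] p

section Orbit

variable [Lattice E] [AddCommGroup E] [IsOrderedAddMonoid E] {e p : E} (Ψ : E ≃+o E)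

theorem firstEntry_nonneg (hΨe : Ψ e = e) (hp : IsComponent e p) (n : ℕ) :
    0 ≤ firstEntry Ψ e p n :=
  le_inf (sub_nonneg.2 (hp.partialSup_iterate_le Ψ hΨe n)) (hp.iterate Ψ hΨe n).1

theorem firstEntry_add_partialSup (hΨe : Ψ e = e) (hp : IsComponent e p) (n : ℕ) :
    firstEntry Ψ e p n + partialSup (fun i => Ψ^[i] p) n =
      partialSup (fun i => Ψ^[i] p) (n + 1) := by
  have hsplit := (hp.iterate Ψ hΨe n).inf_add_inf_sub
    (sub_nonneg.2 (hp.partialSup_iterate_le Ψ hΨe n)) (sub_le_self e (partialSup_nonneg _ n))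
  rw [← sub_sup] at hsplit
  rw [firstEntry, eq_sub_of_add_eq hsplit, partialSup]
  abel

theorem map_firstEntry (hΨe : Ψ e = e) (hp : IsComponent e p) (n : ℕ) :
    Ψ (firstEntry Ψ e p n) = qComp Ψ e p (n + 1) + firstEntry Ψ e p (n + 1) := by
  have hshift : (fun i => Ψ (Ψ^[i] p)) = fun i => Ψ^[i + 1] p :=
    funext fun i => (iterate_succ_apply' Ψ i p).symm
  have hz : Ψ (firstEntry Ψ e p n) =
      (e - partialSup (fun i => Ψ^[i + 1] p) n) ⊓ Ψ^[n + 1] p := by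
    rw [firstEntry, map_inf, map_sub, hΨe, map_partialSup, hshift, iterate_succ_apply']
  have hz0 : 0 ≤ Ψ (firstEntry Ψ e p n) := by
    simpa using OrderHomClass.mono Ψ (firstEntry_nonneg Ψ hΨe hp n)
  have hze : Ψ (firstEntry Ψ e p n) ≤ e :=
    hz ▸ inf_le_right.trans (hp.iterate Ψ hΨe (n + 1)).2.1
  rw [← hp.inf_add_inf_sub hz0 hze, hz]
  congr 1
  · rw [qComp, Nat.add_sub_cancel]
    ac_rfl
  · rw [firstEntry, partialSup_succ', sub_sup, iterate_zero_apply, inf_right_comm,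
      inf_comm (e - p)]

theorem qComp_nonneg_s15 (hΨe : Ψ e = e) (hp : IsComponent e p) (k : ℕ) : 0 ≤ qComp Ψ e p k := by
  refine le_inf (le_inf hp.1 (hp.iterate Ψ hΨe k).1) (sub_nonneg.2 ?_)
  simpa only [iterate_succ_apply] using (hp.map_s15 Ψ hΨe).partialSup_iterate_le Ψ hΨe (k - 1)

section Expectation

variable {F : Type*} [FunLike F E E] [AddMonoidHomClass F E E] (T : F)

theorem sum_Icc_nsmul_qComp (hΨe : Ψ e = e) (hp : IsComponent e p)
    (hTΨ : ∀ x, T (Ψ x) = T x) (N : ℕ) :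
    ∑ k ∈ Finset.Icc 1 N, k • T (qComp Ψ e p k) =
      T (partialSup (fun i => Ψ^[i] p) N) - N • T (firstEntry Ψ e p N) := by
  rw [Finset.sum_Icc_nsmul_eq_sub (h := fun n => T (firstEntry Ψ e p n))
    (P := fun n => T (partialSup (fun i => Ψ^[i] p) n)) (fun n => ?_) (fun n => ?_) N]
  · simp [partialSup]
  · rw [← hTΨ, map_firstEntry Ψ hΨe hp, map_add]
  · rw [← map_add, firstEntry_add_partialSup Ψ hΨe hp]

theorem sum_Icc_nsmul_qComp_le (hΨe : Ψ e = e) (hp : IsComponent e p)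
    (hTΨ : ∀ x, T (Ψ x) = T x) (hT : Monotone T) (hTe : T e = e) (N : ℕ) :
    ∑ k ∈ Finset.Icc 1 N, k • T (qComp Ψ e p k) ≤
      e ⊓ (∑ k ∈ Finset.Icc 1 N, k) • T p := by
  refine le_inf ?_ ?_
  · have hfirst : 0 ≤ T (firstEntry Ψ e p N) := by
      simpa using hT (firstEntry_nonneg Ψ hΨe hp N)
    rw [sum_Icc_nsmul_qComp Ψ T hΨe hp hTΨ]
    exact ((sub_le_self _ (nsmul_nonneg hfirst N)).trans
      (hT (hp.partialSup_iterate_le Ψ hΨe N))).trans_eq hTe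
  · rw [Finset.sum_smul]
    exact Finset.sum_le_sum fun k _ =>
      nsmul_le_nsmul_right (hT (inf_le_left.trans inf_le_left)) k

end Expectation

end Orbit

section BandProjection

variable [ConditionallyCompleteLattice E] [AddCommGroup E]

theorem inf_nsmul_le_bandProjApp (g e : E) (m : ℕ) : e ⊓ m • g ≤ bandProjApp g e :=
  le_ciSup (f := fun m : ℕ => e ⊓ m • g) ⟨e, forall_mem_range.2 fun _ => inf_le_left⟩ m

theorem IsComponent.bandProjApp_le [IsOrderedAddMonoid E] {e c g : E} (hc : IsComponent e c)
    (hg : g ≤ c) : bandProjApp g e ≤ c :=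
  ciSup_le fun m => (inf_le_inf_left e (nsmul_le_nsmul_right hg m)).trans (hc.inf_nsmul_le m)

end BandProjection

namespace IsCEPS

variable [ConditionallyCompleteLattice E] [AddCommGroup E] [Module ℝ E]
  {T S : E →ₗ[ℝ] E} {e : E}

theorem S_mono (h : IsCEPS T S e) : Monotone S := fun x y hxy => by
  rw [← sup_eq_right.2 hxy, h.S_hom]
  exact le_sup_left

variable [IsOrderedAddMonoid E]

theorem T_mono (h : IsCEPS T S e) : Monotone T := fun x y hxy => by
  simpa using h.T_pos (y - x) (sub_nonneg.2 hxy)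

theorem S_injective (h : IsCEPS T S e) : Injective S := by
  refine (injective_iff_map_eq_zero S).2 fun x hx => ?_
  have habs : |x| = 0 := h.T_strictPos _ (abs_nonneg x) <| by
    rw [← h.TS, show |x| = x ⊔ -x from rfl, h.S_hom, map_neg, hx, neg_zero, sup_idem, map_zero]
  exact le_antisymm ((le_abs_self x).trans habs.le) (neg_nonpos.1 ((neg_le_abs x).trans habs.le))

theorem apply_eq_self_of_le (h : IsCEPS T S e) {x : E} (hx : x ≤ S x) : S x = x :=
  sub_eq_zero.1 <| h.T_strictPos _ (sub_nonneg.2 hx) (by rw [map_sub, h.TS, sub_self])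

def orderAddIso (h : IsCEPS T S e) (hS : Surjective S) : E ≃+o E where
  toAddEquiv := AddEquiv.ofBijective S ⟨h.S_injective, hS⟩
  map_le_map_iff' {x y} := ⟨fun hxy => sup_eq_right.1 <| h.S_injective <| by
    rw [h.S_hom]; exact sup_eq_right.2 hxy, fun hxy => h.S_mono hxy⟩

@[simp]
theorem orderAddIso_apply (h : IsCEPS T S e) (hS : Surjective S) (x : E) :
    h.orderAddIso hS x = S x :=
  rfl

theorem surjInv_eq_orderAddIso_symm (h : IsCEPS T S e) (hS : Surjective S) :
    surjInv hS = (h.orderAddIso hS).symm :=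
  funext fun x => h.S_injective <| by
    rw [Function.surjInv_eq hS, ← orderAddIso_apply h hS, OrderAddMonoidIso.apply_symm_apply]

theorem T_orderAddIso_symm (h : IsCEPS T S e) (hS : Surjective S) (x : E) :
    T ((h.orderAddIso hS).symm x) = T x := by
  rw [← h.TS, ← orderAddIso_apply h hS, OrderAddMonoidIso.apply_symm_apply]

theorem apply_eq_self_of_isLUB_iterate (h : IsCEPS T S e) (hS : Surjective S) {p a : E}
    (ha : IsLUB (range fun i => (h.orderAddIso hS).symm^[i] p) a) : S a = a :=
  h.apply_eq_self_of_le <| ha.2 <| forall_mem_range.2 fun i =>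
    calc (h.orderAddIso hS).symm^[i] p = S ((h.orderAddIso hS).symm^[i + 1] p) := by
          rw [iterate_succ_apply', ← orderAddIso_apply h hS, OrderAddMonoidIso.apply_symm_apply]
      _ ≤ S a := h.S_mono (ha.1 (mem_range_self _))

theorem isLUB_T_of_monotone (h : IsCEPS T S e) {f : ℕ → E} (hf : Monotone f) {a : E}
    (ha : IsLUB (range f) a) : IsLUB (range fun n => T (f n)) (T a) := by
  rw [isLUB_range_iff_isGLB_range_sub] at ha ⊢
  have hdir : DirectedOn (· ≥ ·) (range fun n => a - f n) :=
    directedOn_range.2 (Antitone.directed_ge fun m n hmn => sub_le_sub_left (hf hmn) a)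
  simpa [← range_comp, comp_def] using h.T_ordCont _ (range_nonempty _) hdir ha

theorem le_of_forall_sum_Icc_nsmul_le (h : IsCEPS T S e) (Ψ : E ≃+o E) (hΨe : Ψ e = e)
    (hTΨ : ∀ x, T (Ψ x) = T x) {p a u : E} (hp : IsComponent e p)
    (ha : IsLUB (range fun i => Ψ^[i] p) a) (hTa : T a = a)
    (hu : ∀ N, ∑ k ∈ Finset.Icc 1 N, k • T (qComp Ψ e p k) ≤ u) : a ≤ u := by
  have horbit : IsLUB (range (partialSup fun i => Ψ^[i] p)) a := by
    rwa [IsLUB, upperBounds_range_partialSup fun i => (hp.iterate Ψ hΨe i).1]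
  have hT := h.isLUB_T_of_monotone (partialSup_mono _) horbit
  rw [hTa] at hT
  refine sub_nonpos.1 <| le_zero_of_forall_le_sub_add_nsmul hT
    (x := fun n => T (firstEntry Ψ e p n)) (fun n => ?_) (fun n => ?_) ?_ fun N => ?_
  · rw [← firstEntry_add_partialSup Ψ hΨe hp, map_add, add_comm]
  · exact h.T_pos _ (firstEntry_nonneg Ψ hΨe hp n)
  · refine antitone_nat_of_succ_le fun n => ?_
    rw [← hTΨ (firstEntry Ψ e p n), map_firstEntry Ψ hΨe hp, map_add]
    exact le_add_of_nonneg_left (h.T_pos _ (qComp_nonneg_s15 Ψ hΨe hp _))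
  · have hsum := hu N
    rw [sum_Icc_nsmul_qComp Ψ T hΨe hp hTΨ] at hsum
    exact (sub_le_sub_left hsum a).trans_eq (by abel)

end IsCEPS

theorem kac_formula_general {E : Type*} [ConditionallyCompleteLattice E] [AddCommGroup E]
    [Module ℝ E] [CovariantClass E E (· + ·) (· ≤ ·)]
    (T S : E →ₗ[ℝ] E) (e : E) (hCEPS : IsCEPS T S e)
    (hErg : {f : E | S f = f} = Set.range T)
    (hS : Function.Surjective ⇑S)
    (p : E) (hp : IsComponent e p) :
    IsLUB (Set.range fun N : ℕ =>
        ∑ k ∈ Finset.Icc 1 (N + 1), k • T (qComp (Function.surjInv hS) e p k))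
      (bandProjApp (T p) e) := by
  have : IsOrderedAddMonoid E := { add_le_add_left := fun a b h c => add_le_add_left h c }
  set Ψ := (hCEPS.orderAddIso hS).symm
  have hΨe : Ψ e = e := OrderAddMonoidIso.symm_apply_eq _ |>.2 hCEPS.Se.symm
  have hTΨ : ∀ x, T (Ψ x) = T x := hCEPS.T_orderAddIso_symm hS
  obtain ⟨a, ha⟩ : ∃ a, IsLUB (range fun i => Ψ^[i] p) a :=
    ⟨_, isLUB_csSup (range_nonempty _)
      ⟨e, forall_mem_range.2 fun i => (hp.iterate Ψ hΨe i).2.1⟩⟩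
  have hTa : T a = a := by
    obtain ⟨y, rfl⟩ : a ∈ range T := hErg ▸ hCEPS.apply_eq_self_of_isLUB_iterate hS ha
    exact hCEPS.T_proj y
  have hTp : T p ≤ a := hTa ▸ hCEPS.T_mono (ha.1 (mem_range_self 0))
  have hterm_nonneg : ∀ k : ℕ, 0 ≤ k • T (qComp Ψ e p k) := fun k =>
    nsmul_nonneg (hCEPS.T_pos _ (qComp_nonneg_s15 Ψ hΨe hp k)) k
  rw [hCEPS.surjInv_eq_orderAddIso_symm hS]
  refine ⟨forall_mem_range.2 fun N => ?_, fun u hu => ?_⟩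
  · exact (sum_Icc_nsmul_qComp_le Ψ T hΨe hp hTΨ hCEPS.T_mono hCEPS.Te _).trans
      (inf_nsmul_le_bandProjApp _ _ _)
  · refine ((isComponent_of_isLUB (fun i => hp.iterate Ψ hΨe i) ha).bandProjApp_le hTp).trans ?_
    refine hCEPS.le_of_forall_sum_Icc_nsmul_le Ψ hΨe hTΨ hp ha hTa fun N => ?_
    exact (Finset.sum_le_sum_of_subset_of_nonneg (Finset.Icc_subset_Icc_right N.le_succ)
      fun k _ _ => hterm_nonneg k).trans (hu (mem_range_self N))

/-- **Kac's formula in Riesz spaces:** the partial sums `∑_{k=1}^{N} k·T(q(p,k))` have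
supremum `P_{Tp}e` in `E`. -/
theorem kac_formula {E : Type*} [ConditionallyCompleteLattice E] [AddCommGroup E]
    [Module ℝ E] [CovariantClass E E (· + ·) (· ≤ ·)] [PosSMulMono ℝ E]
    (T S : E →ₗ[ℝ] E) (e : E) (hCEPS : IsCEPS T S e)
    (hErg : {f : E | S f = f} = Set.range T)
    (hTuc : TUnivComplete T)
    (hS : Function.Surjective ⇑S)
    (p : E) (hp : IsComponent e p) :
    IsLUB (Set.range fun N : ℕ =>
        ∑ k ∈ Finset.Icc 1 (N + 1), k • T (qComp (Function.surjInv hS) e p k))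
      (bandProjApp (T p) e) :=
  kac_formula_general T S e hCEPS hErg hS p hp
end
end

section
/- Let (E,T,S,e) be a conditional expectation preserving system with T strictly positive and S surjective, let p be a component of e and n ≥ 1 an integer. Define R_k := ⨆_{i≥k} q(p,i) for k ∈ ℕ and q := ⨆_{j≥0} S^{nj} R_{n(j+1)} (both suprema exist in E, being bounded above by e). Then q is a component of e, the elements S^{nj}R_{n(j+1)}, j ≥ 0, are pairwise disjoint, and q, Sq, …, S^{n-1}q are pairwise disjoint. -/
noncomputable section

open Function Set

variable {E : Type*}

/-- `Rk Sinv e p k = ⨆_{i ≥ k} q(p,i)`. -/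
def Rk [ConditionallyCompleteLattice E] [AddCommGroup E] (Sinv : E → E) (e p : E)
    (k : ℕ) : E :=
  ⨆ i : ℕ, qComp Sinv e p (k + i)

/-- `towerBase = q = ⨆_{j ≥ 0} S^{nj} R_{n(j+1)}`. -/
def towerBase [ConditionallyCompleteLattice E] [AddCommGroup E] [Module ℝ E]
    (S : E →ₗ[ℝ] E) (Sinv : E → E) (e p : E) (n : ℕ) : E :=
  ⨆ j : ℕ, (⇑S)^[n * j] (Rk Sinv e p (n * (j + 1)))

/-!
`q(p,k)` is the part of `p` that `S⁻¹` brings back into `p` for the first time after `k` steps, so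
`S⁻ᵇp ⊓ q(p,k) = 0` for `1 ≤ b < k`. Taking suprema and applying `Sᵇ`, this gives
`p ⊓ Sᵇ R_c = 0`, hence `Sᵘ R_a ⊓ Sᵘ⁺ᵇ R_c = 0` whenever `1 ≤ b < c`, because `R_a ≤ p`. Every pair
of layers `S^{nj} R_{n(j+1)}`, and every layer against a shift by `1, …, n-1` of another, is of this
form. The disjointness passes to the supremum `q` by infinite distributivity, and through `Sᵐ` by
pulling back along the Riesz homomorphism `S⁻ᵐ`.
-/

section Lattice

variable [Lattice E]

theorem inf_eq_zero_of_le_of_le_s16 [Zero E] {a b a' b' : E} (h : a ⊓ b = 0) (ha : a' ≤ a)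
    (hb : b' ≤ b) (ha' : 0 ≤ a') (hb' : 0 ≤ b') : a' ⊓ b' = 0 :=
  le_antisymm (h ▸ inf_le_inf ha hb) (le_inf ha' hb')

theorem le_partialSup_s16 [Zero E] (f : ℕ → E) {j N : ℕ} (h : j < N) : f j ≤ partialSup f N := by
  induction N with
  | zero => omega
  | succ N ih =>
    rcases Nat.lt_succ_iff_lt_or_eq.mp h with h | rfl
    · exact (ih h).trans le_sup_left
    · exact le_sup_right

variable [AddCommGroup E] {e p q : E}

theorem isComponent_zero (he : 0 ≤ e) : IsComponent e 0 :=
  ⟨le_rfl, he, inf_eq_right.mpr (by simpa using he)⟩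

variable [AddLeftMono E]

theorem IsComponent.sub (h : IsComponent e p) : IsComponent e (e - p) :=
  ⟨sub_nonneg.2 h.2.1, sub_le_self e h.1, by rw [sub_sub_cancel, inf_comm]; exact h.2.2⟩

theorem IsComponent.inf (hp : IsComponent e p) (hq : IsComponent e q) :
    IsComponent e (p ⊓ q) := by
  let := AddCommGroup.toDistribLattice E
  have hpq : 0 ≤ p ⊓ q := le_inf hp.1 hq.1
  refine ⟨hpq, inf_le_left.trans hp.2.1, ?_⟩
  rw [sub_inf, inf_comm, inf_sup_left,
    inf_eq_zero_of_le_of_le_s16 (inf_comm (e - p) p ▸ hp.2.2) inf_le_left le_rfl hpq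
      (sub_nonneg.2 hp.2.1),
    inf_eq_zero_of_le_of_le_s16 (inf_comm (e - q) q ▸ hq.2.2) inf_le_right le_rfl hpq
      (sub_nonneg.2 hq.2.1), sup_idem]

theorem IsComponent.sup (hp : IsComponent e p) (hq : IsComponent e q) :
    IsComponent e (p ⊔ q) := by
  let := AddCommGroup.toDistribLattice E
  have hpq : 0 ≤ e - (p ⊔ q) := sub_nonneg.2 (sup_le hp.2.1 hq.2.1)
  refine ⟨hp.1.trans le_sup_left, sup_le hp.2.1 hq.2.1, ?_⟩
  rw [inf_sup_left,
    inf_eq_zero_of_le_of_le_s16 hp.2.2 (sub_le_sub_left le_sup_left e) le_rfl hpq hp.1,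
    inf_eq_zero_of_le_of_le_s16 hq.2.2 (sub_le_sub_left le_sup_right e) le_rfl hpq hq.1, sup_idem]

theorem isComponent_partialSup (he : 0 ≤ e) {f : ℕ → E} (hf : ∀ i, IsComponent e (f i)) :
    ∀ N, IsComponent e (partialSup f N)
  | 0 => isComponent_zero he
  | N + 1 => (isComponent_partialSup he hf N).sup (hf N)

end Lattice

section ConditionallyCompleteLattice

variable [ConditionallyCompleteLattice E] [AddCommGroup E] [AddLeftMono E]
  {ι : Type*} [Nonempty ι] {f : ι → E}

theorem inf_ciSup_eq (a : E) (hf : BddAbove (range f)) : a ⊓ ⨆ i, f i = ⨆ i, a ⊓ f i := by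
  have hbdd : BddAbove (range fun i => a ⊓ f i) :=
    ⟨a, by rintro x ⟨i, rfl⟩; exact inf_le_left⟩
  refine le_antisymm ?_ (ciSup_le fun i => inf_le_inf_left a (le_ciSup hf i))
  -- Via `a ⊓ x = a + x - a ⊔ x`.
  have hle : (⨆ i, f i) ≤ (⨆ i, a ⊓ f i) + (a ⊔ ⨆ i, f i) - a := ciSup_le fun i => by
    rw [le_sub_iff_add_le', ← inf_add_sup a (f i)]
    exact add_le_add (le_ciSup hbdd i) (sup_le_sup_left (le_ciSup hf i) a)
  calc a ⊓ ⨆ i, f i = a + (⨆ i, f i) - (a ⊔ ⨆ i, f i) := by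
        rw [← inf_add_sup a (⨆ i, f i)]; abel
    _ ≤ ⨆ i, a ⊓ f i := by rw [sub_le_iff_le_add]; exact le_sub_iff_add_le'.mp hle

theorem inf_ciSup_eq_zero {a : E} (hf : BddAbove (range f)) (h : ∀ i, a ⊓ f i = 0) :
    a ⊓ ⨆ i, f i = 0 := by
  simp only [inf_ciSup_eq a hf, h, ciSup_const]

theorem isComponent_ciSup {e : E} (hf : ∀ i, IsComponent e (f i)) :
    IsComponent e (⨆ i, f i) := by
  have hbdd : BddAbove (range f) := ⟨e, by rintro x ⟨i, rfl⟩; exact (hf i).2.1⟩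
  have hle : (⨆ i, f i) ≤ e := ciSup_le fun i => (hf i).2.1
  refine ⟨(hf (Classical.arbitrary ι)).1.trans (le_ciSup hbdd _), hle, ?_⟩
  exact inf_ciSup_eq_zero hbdd fun i => inf_eq_zero_of_le_of_le_s16 (hf i).2.2
    (sub_le_sub_left (le_ciSup hbdd i) e) le_rfl (sub_nonneg.2 hle) (hf i).1

end ConditionallyCompleteLattice

structure IsRieszHom [Lattice E] [AddCommGroup E] (Φ : E → E) : Prop where
  map_add : ∀ x y, Φ (x + y) = Φ x + Φ y
  map_sup : ∀ x y, Φ (x ⊔ y) = Φ x ⊔ Φ y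

namespace IsRieszHom

variable [Lattice E] [AddCommGroup E] {Φ Ψ : E → E}

theorem map_zero (h : IsRieszHom Φ) : Φ 0 = 0 := by
  simpa using h.map_add 0 0

theorem map_sub (h : IsRieszHom Φ) (x y : E) : Φ (x - y) = Φ x - Φ y :=
  eq_sub_of_add_eq (by rw [← h.map_add, sub_add_cancel])

theorem mono (h : IsRieszHom Φ) : Monotone Φ := fun x y hxy => by
  rw [← sup_eq_right.mpr hxy, h.map_sup]
  exact le_sup_left

theorem map_nonneg (h : IsRieszHom Φ) {x : E} (hx : 0 ≤ x) : 0 ≤ Φ x :=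
  h.map_zero ▸ h.mono hx

theorem map_inf [AddLeftMono E] (h : IsRieszHom Φ) (x y : E) : Φ (x ⊓ y) = Φ x ⊓ Φ y := by
  rw [eq_sub_of_add_eq (inf_add_sup x y), eq_sub_of_add_eq (inf_add_sup (Φ x) (Φ y)), h.map_sub,
    h.map_add, h.map_sup]

theorem comp (hΦ : IsRieszHom Φ) (hΨ : IsRieszHom Ψ) : IsRieszHom (Φ ∘ Ψ) :=
  ⟨fun x y => by simp [hΨ.map_add, hΦ.map_add], fun x y => by simp [hΨ.map_sup, hΦ.map_sup]⟩

theorem iterate (h : IsRieszHom Φ) : ∀ k, IsRieszHom Φ^[k]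
  | 0 => ⟨fun _ _ => rfl, fun _ _ => rfl⟩
  | k + 1 => (h.iterate k).comp h

theorem inverse (h : IsRieszHom Φ) (hΨΦ : LeftInverse Ψ Φ) (hΦΨ : LeftInverse Φ Ψ) :
    IsRieszHom Ψ :=
  ⟨fun x y => by rw [← hΦΨ x, ← hΦΨ y, ← h.map_add, hΨΦ, hΦΨ, hΦΨ],
   fun x y => by rw [← hΦΨ x, ← hΦΨ y, ← h.map_sup, hΨΦ, hΦΨ, hΦΨ]⟩

theorem isComponent [AddLeftMono E] (h : IsRieszHom Φ) {e c : E} (he : Φ e = e)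
    (hc : IsComponent e c) : IsComponent e (Φ c) :=
  ⟨h.map_nonneg hc.1, he ▸ h.mono hc.2.1, by
    rw [← he, ← h.map_sub, ← h.map_inf, hc.2.2, h.map_zero]⟩

end IsRieszHom

theorem IsRieszHom.inf_map_ciSup_eq_zero [ConditionallyCompleteLattice E] [AddCommGroup E]
    [AddLeftMono E] {Φ Ψ : E → E} (h : IsRieszHom Φ) (hΨΦ : LeftInverse Ψ Φ)
    (hΦΨ : LeftInverse Φ Ψ) {f : ℕ → E} (hf : BddAbove (range f)) {a : E}
    (ha : ∀ i, a ⊓ Φ (f i) = 0) : a ⊓ Φ (⨆ i, f i) = 0 := by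
  have hΨ := h.inverse hΨΦ hΦΨ
  have hpull : Ψ a ⊓ ⨆ i, f i = 0 := inf_ciSup_eq_zero hf fun i => by
    rw [← hΨΦ (f i), ← hΨ.map_inf, ha i, hΨ.map_zero]
  rw [← hΦΨ a, ← h.map_inf, hpull, h.map_zero]

theorem IsCEPS.isRieszHom [ConditionallyCompleteLattice E] [AddCommGroup E] [Module ℝ E]
    {T S : E →ₗ[ℝ] E} {e : E} (h : IsCEPS T S e) : IsRieszHom S :=
  ⟨map_add S, h.S_hom⟩

theorem IsCEPS.injective_s16 [ConditionallyCompleteLattice E] [AddCommGroup E] [Module ℝ E]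
    [AddLeftMono E] {T S : E →ₗ[ℝ] E} {e : E} (h : IsCEPS T S e) : Injective S := by
  refine (injective_iff_map_eq_zero S).2 fun x hx => ?_
  have habs : |x| = 0 := h.T_strictPos _ (abs_nonneg x) (by
    rw [← h.TS, abs, h.S_hom, map_neg, hx, neg_zero, sup_idem, map_zero])
  exact le_antisymm ((le_abs_self x).trans habs.le) (neg_nonpos.1 ((neg_le_abs x).trans habs.le))

section FirstReturn

variable [Lattice E] [AddCommGroup E] {Ψ : E → E} {e p : E}

theorem qComp_le (k : ℕ) : qComp Ψ e p k ≤ p :=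
  inf_le_left.trans inf_le_left

variable [AddLeftMono E]

theorem isComponent_partialSup_iterate (hΨ : IsRieszHom Ψ) (hΨe : Ψ e = e)
    (hp : IsComponent e p) (N : ℕ) : IsComponent e (partialSup (fun j => Ψ^[j + 1] p) N) :=
  isComponent_partialSup (hp.1.trans hp.2.1)
    (fun j => (hΨ.iterate (j + 1)).isComponent (iterate_fixed hΨe _) hp) N

theorem isComponent_qComp (hΨ : IsRieszHom Ψ) (hΨe : Ψ e = e) (hp : IsComponent e p) (k : ℕ) :
    IsComponent e (qComp Ψ e p k) :=
  (hp.inf ((hΨ.iterate k).isComponent (iterate_fixed hΨe k) hp)).inf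
    (isComponent_partialSup_iterate hΨ hΨe hp (k - 1)).sub

theorem iterate_inf_qComp_eq_zero (hΨ : IsRieszHom Ψ) (hΨe : Ψ e = e) (hp : IsComponent e p)
    {b k : ℕ} (hb : 1 ≤ b) (hbk : b < k) : Ψ^[b] p ⊓ qComp Ψ e p k = 0 := by
  have hP := isComponent_partialSup_iterate hΨ hΨe hp (k - 1)
  have hle : Ψ^[b] p ≤ partialSup (fun j => Ψ^[j + 1] p) (k - 1) := by
    obtain ⟨b, rfl⟩ : ∃ b', b = b' + 1 := ⟨b - 1, by omega⟩
    exact le_partialSup_s16 (fun j => Ψ^[j + 1] p) (by omega)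
  exact inf_eq_zero_of_le_of_le_s16 (by rw [inf_comm]; exact hP.2.2) hle inf_le_right
    ((hΨ.iterate b).map_nonneg hp.1) (isComponent_qComp hΨ hΨe hp k).1

end FirstReturn

section Rk

variable [ConditionallyCompleteLattice E] [AddCommGroup E] {Ψ : E → E} {e p : E}

theorem Rk_le (k : ℕ) : Rk Ψ e p k ≤ p :=
  ciSup_le fun i => qComp_le (k + i)

variable [AddLeftMono E]

theorem isComponent_Rk (hΨ : IsRieszHom Ψ) (hΨe : Ψ e = e) (hp : IsComponent e p) (k : ℕ) :
    IsComponent e (Rk Ψ e p k) :=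
  isComponent_ciSup fun i => isComponent_qComp hΨ hΨe hp (k + i)

theorem iterate_inf_Rk_eq_zero (hΨ : IsRieszHom Ψ) (hΨe : Ψ e = e) (hp : IsComponent e p)
    {b c : ℕ} (hb : 1 ≤ b) (hbc : b < c) : Ψ^[b] p ⊓ Rk Ψ e p c = 0 :=
  inf_ciSup_eq_zero ⟨e, by rintro _ ⟨i, rfl⟩; exact (isComponent_qComp hΨ hΨe hp _).2.1⟩
    fun _ => iterate_inf_qComp_eq_zero hΨ hΨe hp hb (by omega)

theorem iterate_Rk_inf_iterate_Rk_eq_zero {Φ : E → E} (hΦ : IsRieszHom Φ)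
    (hΨΦ : LeftInverse Ψ Φ) (hΦΨ : LeftInverse Φ Ψ) (hΨe : Ψ e = e) (hp : IsComponent e p)
    {u v : ℕ} (a c : ℕ) (huv : u < v) (hvc : v < u + c) :
    Φ^[u] (Rk Ψ e p a) ⊓ Φ^[v] (Rk Ψ e p c) = 0 := by
  obtain ⟨b, rfl⟩ : ∃ b, v = u + b := ⟨v - u, by omega⟩
  have hΨ := hΦ.inverse hΨΦ hΦΨ
  have hpR : p ⊓ Φ^[b] (Rk Ψ e p c) = 0 := by
    have := congrArg Φ^[b]
      (iterate_inf_Rk_eq_zero hΨ hΨe hp (b := b) (c := c) (by omega) (by omega))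
    rwa [(hΦ.iterate b).map_inf, (hΦ.iterate b).map_zero, hΦΨ.iterate b p] at this
  rw [iterate_add_apply, ← (hΦ.iterate u).map_inf,
    inf_eq_zero_of_le_of_le_s16 hpR (Rk_le a) le_rfl (isComponent_Rk hΨ hΨe hp a).1
      ((hΦ.iterate b).map_nonneg (isComponent_Rk hΨ hΨe hp c).1),
    (hΦ.iterate u).map_zero]

end Rk

-- `towerBase S Ψ e p n` unfolds to `⨆ j, towerLayer S Ψ e p n j`.
def towerLayer [ConditionallyCompleteLattice E] [AddCommGroup E] (Φ Ψ : E → E) (e p : E)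
    (n j : ℕ) : E :=
  Φ^[n * j] (Rk Ψ e p (n * (j + 1)))

section Tower

variable [ConditionallyCompleteLattice E] [AddCommGroup E] [AddLeftMono E] {Φ Ψ : E → E}
  {e p : E} {n : ℕ}

theorem isComponent_towerLayer (hΦ : IsRieszHom Φ) (hΨ : IsRieszHom Ψ) (hΦe : Φ e = e)
    (hΨe : Ψ e = e) (hp : IsComponent e p) (n j : ℕ) : IsComponent e (towerLayer Φ Ψ e p n j) :=
  (hΦ.iterate _).isComponent (iterate_fixed hΦe _) (isComponent_Rk hΨ hΨe hp _)

theorem towerLayer_inf_towerLayer_eq_zero (hΦ : IsRieszHom Φ) (hΨΦ : LeftInverse Ψ Φ)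
    (hΦΨ : LeftInverse Φ Ψ) (hΨe : Ψ e = e) (hp : IsComponent e p) (hn : 1 ≤ n) {j k : ℕ}
    (hjk : j < k) : towerLayer Φ Ψ e p n j ⊓ towerLayer Φ Ψ e p n k = 0 :=
  iterate_Rk_inf_iterate_Rk_eq_zero hΦ hΨΦ hΦΨ hΨe hp _ _ (Nat.mul_lt_mul_of_pos_left hjk hn)
    (by nlinarith)

theorem towerLayer_inf_iterate_towerLayer_eq_zero (hΦ : IsRieszHom Φ) (hΨΦ : LeftInverse Ψ Φ)
    (hΦΨ : LeftInverse Φ Ψ) (hΨe : Ψ e = e) (hp : IsComponent e p) {m : ℕ} (hm : 1 ≤ m)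
    (hmn : m < n) (j k : ℕ) : towerLayer Φ Ψ e p n j ⊓ Φ^[m] (towerLayer Φ Ψ e p n k) = 0 := by
  rw [towerLayer, towerLayer, ← iterate_add_apply]
  rcases le_or_gt j k with hjk | hjk
  · exact iterate_Rk_inf_iterate_Rk_eq_zero hΦ hΨΦ hΦΨ hΨe hp _ _ (by nlinarith) (by nlinarith)
  · rw [inf_comm]
    exact iterate_Rk_inf_iterate_Rk_eq_zero hΦ hΨΦ hΦΨ hΨe hp _ _ (by nlinarith) (by nlinarith)

variable [Module ℝ E] {S : E →ₗ[ℝ] E}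

theorem isComponent_towerBase (hS : IsRieszHom S) (hΨ : IsRieszHom Ψ) (hSe : S e = e)
    (hΨe : Ψ e = e) (hp : IsComponent e p) (n : ℕ) : IsComponent e (towerBase S Ψ e p n) :=
  isComponent_ciSup (isComponent_towerLayer hS hΨ hSe hΨe hp n)

theorem towerBase_inf_iterate_towerBase_eq_zero (hS : IsRieszHom S) (hΨS : LeftInverse Ψ S)
    (hSΨ : LeftInverse S Ψ) (hΨe : Ψ e = e) (hp : IsComponent e p) {m : ℕ} (hm : 1 ≤ m)
    (hmn : m < n) : towerBase S Ψ e p n ⊓ (⇑S)^[m] (towerBase S Ψ e p n) = 0 := by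
  have hSe : S e = e := (congrArg S hΨe).symm.trans (hSΨ e)
  have hbdd : BddAbove (range (towerLayer S Ψ e p n)) := ⟨e, by
    rintro _ ⟨j, rfl⟩
    exact (isComponent_towerLayer hS (hS.inverse hΨS hSΨ) hSe hΨe hp n j).2.1⟩
  rw [inf_comm]
  refine inf_ciSup_eq_zero hbdd fun j => ?_
  rw [inf_comm]
  exact (hS.iterate m).inf_map_ciSup_eq_zero (hΨS.iterate m) (hSΨ.iterate m) hbdd
    (towerLayer_inf_iterate_towerLayer_eq_zero hS hΨS hSΨ hΨe hp hm hmn j)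

theorem iterate_towerBase_inf_iterate_towerBase_eq_zero (hS : IsRieszHom S)
    (hΨS : LeftInverse Ψ S) (hSΨ : LeftInverse S Ψ) (hΨe : Ψ e = e) (hp : IsComponent e p)
    {i j : ℕ} (hij : i < j) (hjn : j < n) :
    (⇑S)^[i] (towerBase S Ψ e p n) ⊓ (⇑S)^[j] (towerBase S Ψ e p n) = 0 := by
  obtain ⟨m, rfl⟩ : ∃ m, j = i + m := ⟨j - i, by omega⟩
  rw [iterate_add_apply, ← (hS.iterate i).map_inf,
    towerBase_inf_iterate_towerBase_eq_zero hS hΨS hSΨ hΨe hp (by omega) (by omega),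
    (hS.iterate i).map_zero]

end Tower

theorem tower_base_construction_general {E : Type*} [ConditionallyCompleteLattice E]
    [AddCommGroup E] [Module ℝ E] [CovariantClass E E (· + ·) (· ≤ ·)]
    (T S : E →ₗ[ℝ] E) (e : E) (hCEPS : IsCEPS T S e)
    (hS : Function.Surjective ⇑S)
    (p : E) (hp : IsComponent e p) (n : ℕ) (hn : 1 ≤ n) :
    (∀ k : ℕ, ∀ i : ℕ, qComp (Function.surjInv hS) e p (k + i) ≤ e) ∧
    (∀ j : ℕ, (⇑S)^[n * j] (Rk (Function.surjInv hS) e p (n * (j + 1))) ≤ e) ∧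
    IsComponent e (towerBase S (Function.surjInv hS) e p n) ∧
    (∀ j k : ℕ, j ≠ k →
      (⇑S)^[n * j] (Rk (Function.surjInv hS) e p (n * (j + 1))) ⊓
        (⇑S)^[n * k] (Rk (Function.surjInv hS) e p (n * (k + 1))) = 0) ∧
    (∀ i j : ℕ, i < n → j < n → i ≠ j →
      (⇑S)^[i] (towerBase S (Function.surjInv hS) e p n) ⊓
        (⇑S)^[j] (towerBase S (Function.surjInv hS) e p n) = 0) := by
  have hSinvS : LeftInverse (surjInv hS) S := leftInverse_surjInv ⟨hCEPS.injective_s16, hS⟩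
  have hSSinv : LeftInverse S (surjInv hS) := rightInverse_surjInv hS
  have hR := hCEPS.isRieszHom
  have hRinv := hR.inverse hSinvS hSSinv
  have hSinve : surjInv hS e = e := (congrArg _ hCEPS.Se).symm.trans (hSinvS e)
  refine ⟨fun k i => (isComponent_qComp hRinv hSinve hp (k + i)).2.1,
    fun j => (isComponent_towerLayer hR hRinv hCEPS.Se hSinve hp n j).2.1,
    isComponent_towerBase hR hRinv hCEPS.Se hSinve hp n, fun j k hjk => ?_,
    fun i j hi hj hij => ?_⟩
  · rcases hjk.lt_or_gt with h | h
    · exact towerLayer_inf_towerLayer_eq_zero hR hSinvS hSSinv hSinve hp hn h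
    · rw [inf_comm]
      exact towerLayer_inf_towerLayer_eq_zero hR hSinvS hSSinv hSinve hp hn h
  · rcases hij.lt_or_gt with h | h
    · exact iterate_towerBase_inf_iterate_towerBase_eq_zero hR hSinvS hSSinv hSinve hp h hj
    · rw [inf_comm]
      exact iterate_towerBase_inf_iterate_towerBase_eq_zero hR hSinvS hSSinv hSinve hp h hi

/-- Construction of the base of the Kakutani–Rokhlin tower: the suprema defining
`R_k` and `q` exist (the respective families are bounded above by `e`), `q` is a
component of `e`, the elements `S^{nj}R_{n(j+1)}` are pairwise disjoint, and
`q, Sq, …, S^{n-1}q` are pairwise disjoint. -/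
theorem tower_base_construction {E : Type*} [ConditionallyCompleteLattice E]
    [AddCommGroup E] [Module ℝ E] [CovariantClass E E (· + ·) (· ≤ ·)] [PosSMulMono ℝ E]
    (T S : E →ₗ[ℝ] E) (e : E) (hCEPS : IsCEPS T S e)
    (hS : Function.Surjective ⇑S)
    (p : E) (hp : IsComponent e p) (n : ℕ) (hn : 1 ≤ n) :
    (∀ k : ℕ, ∀ i : ℕ, qComp (Function.surjInv hS) e p (k + i) ≤ e) ∧
    (∀ j : ℕ, (⇑S)^[n * j] (Rk (Function.surjInv hS) e p (n * (j + 1))) ≤ e) ∧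
    IsComponent e (towerBase S (Function.surjInv hS) e p n) ∧
    (∀ j k : ℕ, j ≠ k →
      (⇑S)^[n * j] (Rk (Function.surjInv hS) e p (n * (j + 1))) ⊓
        (⇑S)^[n * k] (Rk (Function.surjInv hS) e p (n * (k + 1))) = 0) ∧
    (∀ i j : ℕ, i < n → j < n → i ≠ j →
      (⇑S)^[i] (towerBase S (Function.surjInv hS) e p n) ⊓
        (⇑S)^[j] (towerBase S (Function.surjInv hS) e p n) = 0) :=
  tower_base_construction_general T S e hCEPS hS p hp n hn
end
end
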